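/- arXiv:2204.12449 — 3 statements merged into one kernel-verified Lean document; each statement's English description precedes it below -/
import Mathlib

section
/- Countable Poisson splitting: let λ > 0, let N be a Poisson(λ) random variable, and let (U_j)_{j∈ℕ} be an i.i.d. sequence of ℕ-valued random variables with distribution p = (p_i)_{i∈ℕ} (a probability mass function on ℕ), independent of N. For each i ∈ ℕ define the category count Y_i := #{j < N : U_j = i}. Then the random variables (Y_i)_{i∈ℕ} are mutually independent and Y_i has the Poisson(p_i·λ) distribution for every i. -/
/-!
Fix a finite set `s` of categories and lump all the others into one extra category, so that the
labels of the samples live in the finite type `Option s`. Given `N = n`, the vector of label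
counts among the first `n` samples is multinomial; this follows by induction on `n`, since `U n`
is independent of `U 0, …, U (n-1)`. The counts determine `N` as their sum, and multiplying the
multinomial probability by `P(N = n) = e^{-λ} λ^n / n!` cancels `n!`: with label probabilities
`r a` summing to `1`,
`e^{-λ} λ^n / n! · n! / ∏ (k a)! · ∏ (r a)^(k a) = ∏ e^{-r a λ} (r a λ)^(k a) / (k a)!`.
So the counts over `Option s` are independent Poisson variables, and forgetting the extra
category gives the joint law of `(Y i)_{i ∈ s}`.
-/

open MeasureTheory ProbabilityTheory Finset
open scoped NNReal ENNReal Nat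

set_option linter.deprecated false

section Combinatorics

variable {α : Type*} [DecidableEq α]

lemma add_single_one_eq_iff {c k : α → ℕ} {a : α} :
    c + Pi.single a 1 = k ↔ k a ≠ 0 ∧ c = k - Pi.single a 1 := by
  constructor
  · rintro rfl
    refine ⟨by simp, ?_⟩
    ext b
    simp
  · rintro ⟨hka, rfl⟩
    ext b
    rcases eq_or_ne b a with rfl | hba
    · simp only [Pi.add_apply, Pi.sub_apply, Pi.single_eq_same]
      omega
    · simp [hba]

@[to_additive]
lemma prod_sub_single_eq_mul_prod_erase {M : Type*} [CommMonoid M] {s : Finset α} {a : α}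
    (ha : a ∈ s) (k : α → ℕ) (f : α → ℕ → M) :
    ∏ b ∈ s, f b ((k - Pi.single a 1 : α → ℕ) b) =
      f a (k a - 1) * ∏ b ∈ s.erase a, f b (k b) := by
  rw [← mul_prod_erase s _ ha]
  congr 1
  · simp
  · exact prod_congr rfl fun b hb => by simp [ne_of_mem_erase hb]

lemma sum_sub_single_one {s : Finset α} {a : α} (ha : a ∈ s) {k : α → ℕ} (hka : k a ≠ 0) :
    ∑ b ∈ s, (k - Pi.single a 1 : α → ℕ) b = ∑ b ∈ s, k b - 1 := by
  rw [sum_sub_single_eq_add_sum_erase ha k fun _ m => m, ← add_sum_erase s k ha]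
  omega

lemma prod_factorial_eq_mul_prod_factorial_sub_single {s : Finset α} {a : α} (ha : a ∈ s)
    {k : α → ℕ} (hka : k a ≠ 0) :
    ∏ b ∈ s, (k b)! = k a * ∏ b ∈ s, ((k - Pi.single a 1 : α → ℕ) b)! := by
  rw [prod_sub_single_eq_mul_prod_erase ha k fun _ m => m !, ← mul_assoc,
    Nat.mul_factorial_pred hka, mul_prod_erase s (fun b => (k b)!) ha]

lemma Nat.sum_multinomial_sub_single (s : Finset α) {k : α → ℕ} (hk : ∑ a ∈ s, k a ≠ 0) :
    ∑ a ∈ s with k a ≠ 0, Nat.multinomial s (k - Pi.single a 1) = Nat.multinomial s k := by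
  apply Nat.eq_of_mul_eq_mul_left (prod_pos fun a _ => (k a).factorial_pos :
    0 < ∏ a ∈ s, (k a)!)
  rw [mul_sum, Nat.multinomial_spec]
  calc ∑ a ∈ s with k a ≠ 0, (∏ b ∈ s, (k b)!) * Nat.multinomial s (k - Pi.single a 1)
      = ∑ a ∈ s with k a ≠ 0, k a * (∑ b ∈ s, k b - 1)! := by
        refine sum_congr rfl fun a ha => ?_
        obtain ⟨ha, hka⟩ := mem_filter.1 ha
        rw [prod_factorial_eq_mul_prod_factorial_sub_single ha hka, mul_assoc,
          Nat.multinomial_spec, sum_sub_single_one ha hka]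
    _ = (∑ a ∈ s, k a)! := by
        rw [← sum_mul, sum_filter_ne_zero, Nat.mul_factorial_pred hk]

end Combinatorics

section PoissonMultinomial

variable {α : Type*} (s : Finset α) {ρ : α → ℝ≥0} (hρ : ∑ a ∈ s, ρ a = 1) (lam : ℝ≥0)
  (k : α → ℕ)
include hρ

lemma poissonPMFReal_sum_mul_multinomial :
    poissonPMFReal lam (∑ a ∈ s, k a) * (Nat.multinomial s k * ∏ a ∈ s, (ρ a : ℝ) ^ k a) =
      ∏ a ∈ s, poissonPMFReal (ρ a * lam) (k a) := by
  have hspec : (∏ a ∈ s, ((k a)! : ℝ)) * Nat.multinomial s k = (∑ a ∈ s, k a)! := by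
    exact_mod_cast Nat.multinomial_spec s k
  have hexp : ∏ a ∈ s, Real.exp (-(ρ a * lam : ℝ≥0)) = Real.exp (-lam) := by
    rw [← Real.exp_sum, sum_neg_distrib, ← NNReal.coe_sum, ← sum_mul, hρ, one_mul]
  have hpow : ∏ a ∈ s, ((ρ a * lam : ℝ≥0) : ℝ) ^ k a =
      (∏ a ∈ s, (ρ a : ℝ) ^ k a) * (lam : ℝ) ^ ∑ a ∈ s, k a := by
    simp_rw [NNReal.coe_mul, mul_pow, prod_mul_distrib, prod_pow_eq_pow_sum]
  have hfact : (∏ a ∈ s, ((k a)! : ℝ)) ≠ 0 :=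
    prod_ne_zero_iff.2 fun a _ => Nat.cast_ne_zero.2 (k a).factorial_ne_zero
  have hmult : (Nat.multinomial s k : ℝ) ≠ 0 := Nat.cast_ne_zero.2 (Nat.multinomial_pos s k).ne'
  simp only [poissonPMFReal, prod_div_distrib, prod_mul_distrib, hexp, hpow]
  rw [← hspec]
  field_simp

lemma poissonPMF_sum_mul_multinomial :
    poissonPMF lam (∑ a ∈ s, k a) * (Nat.multinomial s k * ∏ a ∈ s, (ρ a : ℝ≥0∞) ^ k a) =
      ∏ a ∈ s, poissonPMF (ρ a * lam) (k a) := by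
  have hnonneg : ∀ r n, 0 ≤ poissonPMFReal r n := fun _ _ => poissonPMFReal_nonneg
  simp only [← poissonPMFReal_ofReal_eq_poissonPMF]
  rw [← ENNReal.ofReal_prod_of_nonneg fun a _ => hnonneg _ _,
    ← poissonPMFReal_sum_mul_multinomial s hρ lam k, ENNReal.ofReal_mul (hnonneg _ _),
    ENNReal.ofReal_mul (Nat.cast_nonneg _), ENNReal.ofReal_natCast,
    ENNReal.ofReal_prod_of_nonneg fun a _ => by positivity]
  simp [ENNReal.ofReal_pow]

end PoissonMultinomial

lemma PMF.map_partialInv_apply_some {β γ : Type*} {f : γ → β} (hf : f.Injective) (p : PMF β)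
    (c : γ) : p.map (Function.partialInv f) (some c) = p (f c) := by
  rw [PMF.map_apply, tsum_eq_single (f c) fun b hb => by simp [eq_comm, hf.isPartialInv c, hb],
    if_pos (Function.partialInv_left hf c).symm]

lemma MeasureTheory.Measure.pi_map_comp_some {ι : Type*} [Fintype ι] {β : Option ι → Type*}
    [∀ o, MeasurableSpace (β o)] (ν : ∀ o, Measure (β o)) [∀ o, IsProbabilityMeasure (ν o)] :
    (Measure.pi ν).map (fun x i => x (some i)) = Measure.pi fun i => ν (some i) := by
  refine (Measure.pi_eq fun t ht => ?_).symm
  rw [Measure.map_apply (measurable_pi_lambda _ fun i => measurable_pi_apply (some i))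
    (.univ_pi ht)]
  have hpreimage : (fun (x : ∀ o, β o) i => x (some i)) ⁻¹' Set.univ.pi t =
      Set.univ.pi fun o => Option.rec Set.univ t o := by
    ext x
    simp [Option.forall]
  rw [hpreimage, Measure.pi_pi, Fintype.prod_option]
  simp

lemma ProbabilityTheory.iIndepFun.measure_preimage_inter_eq_mul {Ω ι : Type*}
    [MeasurableSpace Ω] {μ : Measure Ω} {β : ι → Type*} {m : ∀ i, MeasurableSpace (β i)}
    {f : ∀ i, Ω → β i} (h : iIndepFun f μ) (hf : ∀ i, Measurable (f i)) {i : ι} {T : Set ι}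
    (hi : i ∉ T) {B : Set (β i)} (hB : MeasurableSet B) {A : Set Ω}
    (hA : MeasurableSet[⨆ j ∈ T, (m j).comap (f j)] A) :
    μ (f i ⁻¹' B ∩ A) = μ (f i ⁻¹' B) * μ A := by
  have hST := indep_iSup_of_disjoint (fun j => (hf j).comap_le)
    ((iIndepFun_iff_iIndep _ _ _).1 h) (Set.disjoint_singleton_left.2 hi)
  refine (Indep_iff _ _ _).1 hST _ _ ?_ hA
  exact le_iSup₂ (f := fun j (_ : j ∈ ({i} : Set ι)) => (m j).comap (f j)) i rfl _ ⟨B, hB, rfl⟩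

section SampleCount

variable {Ω α : Type*} [DecidableEq α]

def sampleCount (V : ℕ → Ω → α) (n : ℕ) (ω : Ω) (a : α) : ℕ :=
  #{j ∈ range n | V j ω = a}

variable (V : ℕ → Ω → α)

@[simp]
lemma sampleCount_zero (ω : Ω) : sampleCount V 0 ω = 0 := by
  ext a
  simp [sampleCount]

lemma sampleCount_succ (n : ℕ) (ω : Ω) :
    sampleCount V (n + 1) ω = sampleCount V n ω + Pi.single (V n ω) 1 := by
  ext a
  rcases eq_or_ne (V n ω) a with h | h
  · simp [sampleCount, range_add_one, filter_insert, h]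
  · simp [sampleCount, range_add_one, filter_insert, h, Ne.symm h]

lemma sum_sampleCount [Fintype α] (n : ℕ) (ω : Ω) : ∑ a, sampleCount V n ω a = n := by
  simp only [sampleCount]
  rw [← card_eq_sum_card_fiberwise fun j _ => mem_univ (V j ω), card_range]

lemma sampleCount_partialInv_some {γ : Type*} [DecidableEq γ] {f : γ → α} (hf : f.Injective)
    (n : ℕ) (ω : Ω) (c : γ) :
    sampleCount (fun j => Function.partialInv f ∘ V j) n ω (some c) = sampleCount V n ω (f c) := by
  simp only [sampleCount, Function.comp_apply, hf.isPartialInv c, eq_comm]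

variable {V} [MeasurableSpace α] [MeasurableSingletonClass α]

lemma measurable_sampleCount {ℱ : MeasurableSpace Ω} {n : ℕ}
    (hV : ∀ j < n, Measurable[ℱ] (V j)) : Measurable[ℱ] (sampleCount V n) := by
  refine measurable_pi_lambda _ fun a => ?_
  simp only [sampleCount, card_filter]
  exact Finset.measurable_sum _ fun j hj =>
    Measurable.ite (hV j (mem_range.1 hj) (measurableSet_singleton a)) measurable_const
      measurable_const

lemma measurable_sampleCount_comp [MeasurableSpace Ω] {N : Ω → ℕ} (hN : Measurable N)
    (hV : ∀ j, Measurable (V j)) : Measurable fun ω => sampleCount V (N ω) ω :=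
  (measurable_from_prod_countable_right (f := fun p : ℕ × Ω => sampleCount V p.1 p.2)
    fun _ => measurable_sampleCount fun j _ => hV j).comp (hN.prodMk measurable_id)

end SampleCount

section Multinomial

variable {Ω α : Type*} [MeasurableSpace Ω] {μ : Measure Ω} [IsProbabilityMeasure μ]
  [Fintype α] [DecidableEq α] [MeasurableSpace α] [MeasurableSingletonClass α]

theorem measure_sampleCount_eq_multinomial {V : ℕ → Ω → α} (hV : ∀ j, Measurable (V j))
    (r : PMF α) (hlaw : ∀ j, μ.map (V j) = r.toMeasure) (hindep : iIndepFun V μ) {n : ℕ}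
    {k : α → ℕ} (hk : ∑ a, k a = n) :
    μ {ω | sampleCount V n ω = k} = Nat.multinomial univ k * ∏ a, r a ^ k a := by
  induction n generalizing k with
  | zero =>
    obtain rfl : k = 0 := funext fun a => (Finset.sum_eq_zero_iff.1 hk) a (mem_univ a)
    simp [Nat.multinomial]
  | succ n ih =>
    have hpiece : ∀ a, μ (V n ⁻¹' {a} ∩ {ω | sampleCount V n ω + Pi.single a 1 = k}) =
        (if k a = 0 then 0 else (Nat.multinomial univ (k - Pi.single a 1) : ℝ≥0∞)) *
          ∏ b, r b ^ k b := by
      intro a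
      have hmeas : MeasurableSet[⨆ j ∈ Set.Iio n, MeasurableSpace.comap (V j) ‹_›]
          {ω | sampleCount V n ω + Pi.single a 1 = k} :=
        (measurable_sampleCount fun j hj => (comap_measurable (V j)).mono
          (le_iSup₂ (f := fun j (_ : j ∈ Set.Iio n) => MeasurableSpace.comap (V j) ‹_›) j hj)
          le_rfl).add_const _ (measurableSet_singleton k)
      rw [hindep.measure_preimage_inter_eq_mul hV (T := Set.Iio n) (lt_irrefl n)
          (measurableSet_singleton a) hmeas,
        ← Measure.map_apply (hV n) (measurableSet_singleton a), hlaw,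
        PMF.toMeasure_apply_singleton _ _ (measurableSet_singleton a)]
      simp_rw [add_single_one_eq_iff]
      split_ifs with hka
      · simp [hka]
      · have hsum : ∑ b, (k - Pi.single a 1 : α → ℕ) b = n := by
          rw [sum_sub_single_one (mem_univ a) hka, hk, Nat.add_sub_cancel]
        simp only [hka, ne_eq, not_false_eq_true, true_and]
        obtain ⟨m, hm⟩ := Nat.exists_eq_succ_of_ne_zero hka
        rw [ih hsum, prod_sub_single_eq_mul_prod_erase (mem_univ a) k fun b m => r b ^ m,
          ← mul_prod_erase univ (fun b => r b ^ k b) (mem_univ a), hm, Nat.succ_sub_one,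
          pow_succ]
        ring
    have hunion : {ω | sampleCount V (n + 1) ω = k} =
        ⋃ a, V n ⁻¹' {a} ∩ {ω | sampleCount V n ω + Pi.single a 1 = k} := by
      ext ω
      simp [sampleCount_succ]
    have hdisj : Pairwise (Function.onFun Disjoint
        fun a => V n ⁻¹' {a} ∩ {ω | sampleCount V n ω + Pi.single a 1 = k}) := fun a b hab =>
      ((Set.disjoint_singleton.2 hab).preimage (V n)).mono Set.inter_subset_left
        Set.inter_subset_left
    have hmeas : ∀ a,
        MeasurableSet (V n ⁻¹' {a} ∩ {ω | sampleCount V n ω + Pi.single a 1 = k}) :=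
      fun a => (hV n (measurableSet_singleton a)).inter
        ((measurable_sampleCount fun j _ => hV j).add_const _ (measurableSet_singleton k))
    rw [hunion, measure_iUnion hdisj hmeas, tsum_fintype]
    simp_rw [hpiece]
    rw [← sum_mul, ← Nat.sum_multinomial_sub_single univ (hk ▸ n.succ_ne_zero)]
    simp only [sum_filter, ite_not, Nat.cast_sum, Nat.cast_ite, Nat.cast_zero]

end Multinomial

section Splitting

variable {Ω : Type*} [MeasurableSpace Ω] {μ : Measure Ω} [IsProbabilityMeasure μ]
  {N : Ω → ℕ} {U : ℕ → Ω → ℕ} (hN : Measurable N) (hU : ∀ j, Measurable (U j))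
  (hindep : iIndepFun (fun o : Option ℕ => Option.elim o N U) μ) (lam : ℝ≥0)
  (hNlaw : μ.map N = (poissonPMF lam).toMeasure) (p : PMF ℕ)
  (hUlaw : ∀ j, μ.map (U j) = p.toMeasure)
include hN hU hindep hNlaw hUlaw

theorem map_sampleCount_eq_pi_poisson {α : Type*} [Fintype α] [DecidableEq α]
    [MeasurableSpace α] [MeasurableSingletonClass α] (ℓ : ℕ → α) :
    μ.map (fun ω => sampleCount (fun j => ℓ ∘ U j) (N ω) ω) =
      Measure.pi fun a => (poissonPMF ((p.map ℓ a).toNNReal * lam)).toMeasure := by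
  set V : ℕ → Ω → α := fun j => ℓ ∘ U j
  have hℓ : Measurable ℓ := .of_discrete
  have hV : ∀ j, Measurable (V j) := fun j => hℓ.comp (hU j)
  have hVlaw : ∀ j, μ.map (V j) = (p.map ℓ).toMeasure := fun j => by
    rw [← Measure.map_map hℓ (hU j), hUlaw, PMF.toMeasure_map ℓ p hℓ]
  have hVindep : iIndepFun V μ :=
    (hindep.precomp (Option.some_injective ℕ)).comp (fun _ => ℓ) fun _ => hℓ
  have hρ : ∑ a, (p.map ℓ a).toNNReal = 1 := by
    rw [← ENNReal.toNNReal_sum fun a _ => PMF.apply_ne_top _ a,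
      ← tsum_fintype (L := .unconditional _), PMF.tsum_coe, ENNReal.toNNReal_one]
  refine Measure.ext_of_singleton fun k => ?_
  rw [Measure.map_apply (measurable_sampleCount_comp hN hV) (measurableSet_singleton k),
    Measure.pi_singleton]
  -- The counts add up to `N`, so they pin down the value of `N`.
  have hevent : (fun ω => sampleCount V (N ω) ω) ⁻¹' {k} =
      N ⁻¹' {∑ a, k a} ∩ {ω | sampleCount V (∑ a, k a) ω = k} := by
    ext ω
    simp only [Set.mem_preimage, Set.mem_singleton_iff, Set.mem_inter_iff, Set.mem_setOf_eq]
    constructor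
    · rintro rfl
      rw [sum_sampleCount]
      exact ⟨rfl, rfl⟩
    · rintro ⟨hω, h⟩
      rwa [hω]
  have hmeas : MeasurableSet[⨆ o ∈ Set.range some,
      MeasurableSpace.comap (Option.elim o N U) inferInstance]
      {ω | sampleCount V (∑ a, k a) ω = k} :=
    measurable_sampleCount (fun j _ => hℓ.comp ((comap_measurable (U j)).mono
      (le_iSup₂ (f := fun o (_ : o ∈ Set.range some) =>
        MeasurableSpace.comap (Option.elim o N U) inferInstance) (some j) ⟨j, rfl⟩) le_rfl))
      (measurableSet_singleton k)
  have hNindep : μ (N ⁻¹' {∑ a, k a} ∩ {ω | sampleCount V (∑ a, k a) ω = k}) =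
      μ (N ⁻¹' {∑ a, k a}) * μ {ω | sampleCount V (∑ a, k a) ω = k} :=
    hindep.measure_preimage_inter_eq_mul (fun o => o.rec hN hU) (i := none) (by simp)
      (measurableSet_singleton _) hmeas
  have hpoisson := poissonPMF_sum_mul_multinomial univ hρ lam k
  simp only [ENNReal.coe_toNNReal (PMF.apply_ne_top _ _)] at hpoisson
  rw [hevent, hNindep, ← Measure.map_apply hN (measurableSet_singleton _), hNlaw,
    measure_sampleCount_eq_multinomial hV (p.map ℓ) hVlaw hVindep rfl]
  simp only [PMF.toMeasure_apply_singleton _ _ (measurableSet_singleton _), hpoisson]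

theorem map_restrict_sampleCount_eq_pi_poisson (s : Finset ℕ) :
    μ.map (fun ω (i : s) => sampleCount U (N ω) ω i) =
      Measure.pi fun i : s => (poissonPMF ((p i).toNNReal * lam)).toMeasure := by
  let _ : MeasurableSpace (Option s) := ⊤
  set ℓ := Function.partialInv ((↑) : s → ℕ)
  have hfactor : (fun ω (i : s) => sampleCount U (N ω) ω i) =
      (fun z (i : s) => z (some i)) ∘ fun ω => sampleCount (fun j => ℓ ∘ U j) (N ω) ω := by
    funext ω i
    simp [ℓ, sampleCount_partialInv_some U Subtype.val_injective]
  rw [hfactor, ← Measure.map_map (measurable_pi_lambda _ fun i => measurable_pi_apply (some i))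
      (measurable_sampleCount_comp hN fun j => Measurable.of_discrete.comp (hU j)),
    map_sampleCount_eq_pi_poisson hN hU hindep lam hNlaw p hUlaw ℓ, Measure.pi_map_comp_some]
  simp [ℓ, PMF.map_partialInv_apply_some Subtype.val_injective]

end Splitting

theorem poisson_splitting_general
    {Ω : Type*} [MeasurableSpace Ω] (μ : Measure Ω) [IsProbabilityMeasure μ]
    (lam : ℝ≥0)
    (N : Ω → ℕ) (U : ℕ → Ω → ℕ)
    (hN : Measurable N) (hU : ∀ j, Measurable (U j))
    (p : PMF ℕ)
    (hNlaw : μ.map N = (poissonPMF lam).toMeasure)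
    (hUlaw : ∀ j, μ.map (U j) = p.toMeasure)
    (hindep : iIndepFun
      (fun o : Option ℕ => Option.elim o N U) μ)
    (Y : ℕ → Ω → ℕ)
    (hY : ∀ i ω, Y i ω = ((Finset.range (N ω)).filter (fun j => U j ω = i)).card) :
    iIndepFun Y μ ∧
      ∀ i : ℕ, μ.map (Y i) = (poissonPMF ((p i).toNNReal * lam)).toMeasure := by
  obtain rfl : Y = fun i ω => sampleCount U (N ω) ω i := funext fun i => funext (hY i)
  have hlaw := map_restrict_sampleCount_eq_pi_poisson hN hU hindep lam hNlaw p hUlaw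
  have hYmeas : ∀ i, Measurable fun ω => sampleCount U (N ω) ω i := fun i =>
    (measurable_pi_apply i).comp (measurable_sampleCount_comp hN hU)
  have hmarginal : ∀ i, μ.map (fun ω => sampleCount U (N ω) ω i) =
      (poissonPMF ((p i).toNNReal * lam)).toMeasure := fun i => by
    have h := congrArg (Measure.map (Function.eval ⟨i, mem_singleton_self i⟩)) (hlaw {i})
    rwa [Measure.map_map (measurable_pi_apply _)
        (measurable_pi_lambda _ fun j : ({i} : Finset ℕ) => hYmeas j),
      (measurePreserving_eval _ _).map_eq] at h
  refine ⟨iIndepFun_iff_finset.2 fun s => ?_, hmarginal⟩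
  refine (iIndepFun_iff_map_fun_eq_pi_map fun i : s => (hYmeas i).aemeasurable).2 ?_
  simpa only [Finset.restrict, hmarginal] using hlaw s

/-- Countable Poisson splitting: if `N ~ Poisson(λ)` and `(U j)` is an i.i.d. sequence with
distribution `p` on `ℕ`, independent of `N`, then the category counts
`Y i = #{j < N : U j = i}` are mutually independent with `Y i ~ Poisson(p i · λ)`. -/
theorem poisson_splitting
    {Ω : Type*} [MeasurableSpace Ω] (μ : Measure Ω) [IsProbabilityMeasure μ]
    (lam : ℝ≥0) (hlam : 0 < lam)
    (N : Ω → ℕ) (U : ℕ → Ω → ℕ)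
    (hN : Measurable N) (hU : ∀ j, Measurable (U j))
    (p : PMF ℕ)
    (hNlaw : μ.map N = (poissonPMF lam).toMeasure)
    (hUlaw : ∀ j, μ.map (U j) = p.toMeasure)
    (hindep : iIndepFun
      (fun o : Option ℕ => Option.elim o N U) μ)
    (Y : ℕ → Ω → ℕ)
    (hY : ∀ i ω, Y i ω = ((Finset.range (N ω)).filter (fun j => U j ω = i)).card) :
    iIndepFun Y μ ∧
      ∀ i : ℕ, μ.map (Y i) = (poissonPMF ((p i).toNNReal * lam)).toMeasure :=
  poisson_splitting_general μ lam N U hN hU p hNlaw hUlaw hindep Y hY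
end

section
/- Deterministic λ-recursion for the INGARCH(p, q) equivalence: let p, q ≥ 1, let κ_1, …, κ_p be real numbers, let β_1, …, β_q ≥ 0 with s := Σ_{l=1}^q β_l < 1, let τ be real, let x : ℤ → ℝ be any sequence, and let ρ_{1−q}, …, ρ_0 be real numbers. Let π : ℤ → ℝ satisfy π_0 = 1, π_k = 0 for k < 0, and π_j = Σ_{l=1}^q β_l π_{j−l} for all j ≥ 1. For every integer t ≥ 1 − q define λ_t := τ + (1 − s)·[ Σ_{k=1}^p Σ_{i=1}^{t+p−1} κ_k · π_{i−k} · x_{t−i} + Σ_{m=1−q}^{0} π_{t−m} · ρ_m ]. Then for every t ≥ 1, λ_t = (1 − s)τ + Σ_{k=1}^p (1 − s)κ_k · x_{t−k} + Σ_{j=1}^q β_j · λ_{t−j}. -/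
/-- Deterministic λ-recursion for the INGARCH(p, q) equivalence: if `π` satisfies the renewal
recursion and, for `t ≥ 1 - q`,
`λ t = τ + (1-s)·[ ∑_{k=1}^p ∑_{i=1}^{t+p-1} κ k · π (i-k) · x (t-i) + ∑_{m=1-q}^0 π (t-m)·ρ m ]`
with `s = ∑_{l=1}^q β l`, then for every `t ≥ 1`,
`λ t = (1-s)τ + ∑_{k=1}^p (1-s)κ k · x (t-k) + ∑_{j=1}^q β j · λ (t-j)`. -/
theorem ingarch_pq_lambda_recursion
    (p q : ℕ) (hp : 1 ≤ p) (hq : 1 ≤ q)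
    (κ : ℕ → ℝ) (β : ℕ → ℝ) (hβ : ∀ j ∈ Finset.Icc 1 q, 0 ≤ β j)
    (hs : ∑ l ∈ Finset.Icc 1 q, β l < 1)
    (τ : ℝ) (x : ℤ → ℝ) (ρ : ℤ → ℝ)
    (π : ℤ → ℝ)
    (hπ0 : π 0 = 1)
    (hπneg : ∀ k : ℤ, k < 0 → π k = 0)
    (hπrec : ∀ j : ℤ, 1 ≤ j → π j = ∑ l ∈ Finset.Icc 1 q, β l * π (j - l))
    (lam : ℤ → ℝ)
    (hlam : ∀ t : ℤ, 1 - (q : ℤ) ≤ t →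
      lam t = τ + (1 - ∑ l ∈ Finset.Icc 1 q, β l) *
        ((∑ k ∈ Finset.Icc 1 p, ∑ i ∈ Finset.Icc (1 : ℤ) (t + p - 1),
            κ k * π (i - k) * x (t - i))
          + ∑ m ∈ Finset.Icc (1 - (q : ℤ)) 0, π (t - m) * ρ m)) :
    ∀ t : ℤ, 1 ≤ t →
      lam t = (1 - ∑ l ∈ Finset.Icc 1 q, β l) * τ
        + (∑ k ∈ Finset.Icc 1 p, (1 - ∑ l ∈ Finset.Icc 1 q, β l) * κ k * x (t - k))
        + ∑ j ∈ Finset.Icc 1 q, β j * lam (t - j) := by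
  intro t ht
  set s : ℝ := ∑ l ∈ Finset.Icc 1 q, β l with hsdef
  set A : ℤ → ℝ := fun u => ∑ k ∈ Finset.Icc 1 p, ∑ i ∈ Finset.Icc (1 : ℤ) (u + p - 1),
      κ k * π (i - k) * x (u - i) with hA
  set B : ℤ → ℝ := fun u => ∑ m ∈ Finset.Icc (1 - (q : ℤ)) 0, π (u - m) * ρ m with hBdef
  have hlam' : ∀ u : ℤ, 1 - (q : ℤ) ≤ u → lam u = τ + (1 - s) * (A u + B u) := hlam
  -- delta lemma
  have hδ : ∀ n : ℤ, ∑ j ∈ Finset.Icc 1 q, β j * π (n - j) =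
      π n - (if n = 0 then 1 else 0) := by
    intro n
    rcases lt_trichotomy n 0 with hn | hn | hn
    · rw [if_neg hn.ne, hπneg n hn]
      rw [Finset.sum_eq_zero]
      · ring
      · intro j hj
        simp only [Finset.mem_Icc] at hj
        rw [hπneg _ (by omega), mul_zero]
    · subst hn
      rw [if_pos rfl, hπ0]
      rw [Finset.sum_eq_zero]
      · ring
      · intro j hj
        simp only [Finset.mem_Icc] at hj
        rw [hπneg _ (by omega), mul_zero]
    · rw [if_neg hn.ne', ← hπrec n hn]
      ring
  -- B recursion
  have hB : B t = ∑ j ∈ Finset.Icc 1 q, β j * B (t - j) := by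
    simp only [hBdef]
    calc ∑ m ∈ Finset.Icc (1 - (q:ℤ)) 0, π (t - m) * ρ m
        = ∑ m ∈ Finset.Icc (1 - (q:ℤ)) 0, ∑ j ∈ Finset.Icc 1 q,
            β j * (π (t - j - m) * ρ m) := by
          refine Finset.sum_congr rfl ?_
          intro m hm
          simp only [Finset.mem_Icc] at hm
          rw [hπrec (t - m) (by omega), Finset.sum_mul]
          refine Finset.sum_congr rfl ?_
          intro j hj
          rw [show t - m - (j:ℤ) = t - j - m by ring]
          ring
      _ = ∑ j ∈ Finset.Icc 1 q, β j * ∑ m ∈ Finset.Icc (1 - (q:ℤ)) 0,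
            π (t - j - m) * ρ m := by
          rw [Finset.sum_comm]
          simp only [Finset.mul_sum]
  -- per-(j,k) reindexing for A
  have hshift : ∀ j ∈ Finset.Icc 1 q, ∀ k ∈ Finset.Icc 1 p,
      ∑ i ∈ Finset.Icc (1 : ℤ) (t - j + p - 1), κ k * π (i - k) * x (t - j - i)
        = ∑ i ∈ Finset.Icc (1 : ℤ) (t + p - 1), κ k * π (i - j - k) * x (t - i) := by
    intro j hj k hk
    simp only [Finset.mem_Icc] at hj hk
    have h1 : ∑ i ∈ Finset.Icc (1 : ℤ) (t - j + p - 1), κ k * π (i - k) * x (t - j - i)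
        = ∑ i ∈ Finset.Icc ((1:ℤ) + j) (t + p - 1), κ k * π (i - j - k) * x (t - i) := by
      refine Finset.sum_nbij' (fun a => a + (j:ℤ)) (fun b => b - (j:ℤ)) ?_ ?_ ?_ ?_ ?_
      · intro a ha; simp only [Finset.mem_Icc] at ha ⊢; omega
      · intro b hb; simp only [Finset.mem_Icc] at hb ⊢; omega
      · intro a _; ring
      · intro b _; ring
      · intro a _
        rw [show a + (j:ℤ) - j - k = a - k by ring, show t - (a + (j:ℤ)) = t - j - a by ring]
    rw [h1]
    refine Finset.sum_subset ?_ ?_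
    · intro b hb; simp only [Finset.mem_Icc] at hb ⊢; omega
    · intro b hb hb2
      simp only [Finset.mem_Icc] at hb hb2
      rw [hπneg (b - j - k) (by omega), mul_zero, zero_mul]
  -- A recursion
  have hAr : A t = (∑ k ∈ Finset.Icc 1 p, κ k * x (t - k))
      + ∑ j ∈ Finset.Icc 1 q, β j * A (t - j) := by
    have h2 : ∑ j ∈ Finset.Icc 1 q, β j * A (t - j)
        = ∑ k ∈ Finset.Icc 1 p, ∑ i ∈ Finset.Icc (1:ℤ) (t + p - 1),
            (κ k * x (t - i)) * ∑ j ∈ Finset.Icc 1 q, β j * π (i - k - j) := by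
      calc ∑ j ∈ Finset.Icc 1 q, β j * A (t - j)
          = ∑ j ∈ Finset.Icc 1 q, ∑ k ∈ Finset.Icc 1 p, ∑ i ∈ Finset.Icc (1:ℤ) (t + p - 1),
              (κ k * x (t - i)) * (β j * π (i - k - j)) := by
            refine Finset.sum_congr rfl ?_
            intro j hj
            simp only [hA]
            rw [Finset.mul_sum]
            refine Finset.sum_congr rfl ?_
            intro k hk
            rw [hshift j hj k hk, Finset.mul_sum]
            refine Finset.sum_congr rfl ?_
            intro i _
            rw [show i - (j:ℤ) - k = i - k - j by ring]
            ring
        _ = _ := by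
            rw [Finset.sum_comm]
            refine Finset.sum_congr rfl fun k _ => ?_
            rw [Finset.sum_comm]
            refine Finset.sum_congr rfl fun i _ => ?_
            rw [Finset.mul_sum]
    rw [h2]
    have h3 : ∀ k ∈ Finset.Icc 1 p, ∀ i ∈ Finset.Icc (1:ℤ) (t + p - 1),
        (κ k * x (t - i)) * ∑ j ∈ Finset.Icc 1 q, β j * π (i - k - j)
          = κ k * π (i - k) * x (t - i) - (if i = (k:ℤ) then κ k * x (t - i) else 0) := by
      intro k _ i _
      rw [hδ (i - k)]
      rcases eq_or_ne i (k:ℤ) with h | h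
      · rw [if_pos h, if_pos (by omega), h]; ring
      · rw [if_neg h, if_neg (by omega)]; ring
    calc A t = (∑ k ∈ Finset.Icc 1 p, ∑ i ∈ Finset.Icc (1:ℤ) (t + p - 1),
          (if i = (k:ℤ) then κ k * x (t - i) else 0))
        + ∑ k ∈ Finset.Icc 1 p, ∑ i ∈ Finset.Icc (1:ℤ) (t + p - 1),
            (κ k * π (i - k) * x (t - i) - (if i = (k:ℤ) then κ k * x (t - i) else 0)) := by
          simp only [hA]
          rw [← Finset.sum_add_distrib]
          refine Finset.sum_congr rfl ?_
          intro k _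
          rw [← Finset.sum_add_distrib]
          refine Finset.sum_congr rfl ?_
          intro i _
          ring
      _ = _ := by
          congr 1
          · refine Finset.sum_congr rfl ?_
            intro k hk
            simp only [Finset.mem_Icc] at hk
            rw [Finset.sum_ite_eq' (Finset.Icc (1:ℤ) (t + p - 1)) (k:ℤ)
              (fun i => κ k * x (t - i))]
            rw [if_pos (by simp only [Finset.mem_Icc]; omega)]
          · refine Finset.sum_congr rfl ?_
            intro k hk
            refine Finset.sum_congr rfl ?_
            intro i hi
            exact (h3 k hk i hi).symm
  -- assemble
  have hsum : ∑ j ∈ Finset.Icc 1 q, β j * lam (t - j)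
      = s * τ + (1 - s) * ((∑ j ∈ Finset.Icc 1 q, β j * A (t - j))
          + ∑ j ∈ Finset.Icc 1 q, β j * B (t - j)) := by
    calc ∑ j ∈ Finset.Icc 1 q, β j * lam (t - j)
        = ∑ j ∈ Finset.Icc 1 q, (β j * τ + ((1 - s) * (β j * A (t - j))
            + (1 - s) * (β j * B (t - j)))) := by
          refine Finset.sum_congr rfl ?_
          intro j hj
          simp only [Finset.mem_Icc] at hj
          rw [hlam' (t - j) (by omega)]
          ring
      _ = _ := by
          rw [Finset.sum_add_distrib, Finset.sum_add_distrib, ← Finset.sum_mul,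
            ← Finset.mul_sum, ← Finset.mul_sum, ← hsdef]
          ring
  rw [hlam' t (by omega), hsum, hAr, hB]
  have : ∑ k ∈ Finset.Icc 1 p, (1 - s) * κ k * x (t - k)
      = (1 - s) * ∑ k ∈ Finset.Icc 1 p, κ k * x (t - k) := by
    rw [Finset.mul_sum]; refine Finset.sum_congr rfl fun k _ => by ring
  rw [this]
  ring
end

section
/- Equivalence of the thinning-based and classical Poisson INGARCH(1,1) models: let τ > 0, κ > 0, 0 ≤ β < 1, η > 0 and X_0 ∈ ℕ be fixed. Define the thinning-based process {X_t}_{t≥0} by: E_0 ~ Poisson(η); recursively, given the past, L_t = β ∘ E_t (binomial thinning), A_t = E_t − L_t, C_t = κ ⋆ X_t (Poisson thinning), E_{t+1} = L_t + C_t, and X_{t+1} = I_{t+1} + A_{t+1}, where the I_t are i.i.d. Poisson(τ) and all thinnings and draws are conditionally independent given the past. Define the classical process {X'_t}_{t≥0} by: X'_0 = X_0, λ_0 = τ + (1 − β)η, and for t ≥ 1, X'_t given (X'_{t−1}, …, X'_0) is Poisson(λ_t) with λ_t = ν + α X'_{t−1} + β λ_{t−1}, where ν = (1 − β)τ and α =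 (1 − β)κ. Then the two processes have the same distribution: the law of (X_t)_{t≥0} on ℕ^ℕ equals the law of (X'_t)_{t≥0}. -/
/-!
Given the past, `Eₜ` is Poisson with rate `μₜ`, where `μ₀ = η` and `μₜ₊₁ = β μₜ + κ Xₜ`:
Poisson laws are closed under independent sums, and binomial thinning splits `Pois(μ)`
into independent `Pois(β μ)` and `Pois((1 - β) μ)` parts. So `Lₜ ~ Pois(β μₜ)` is
independent of `Xₜ₊₁ ~ Pois(τ + (1 - β) μₜ₊₁)`, and `λₜ = τ + (1 - β) μₜ` obeys the
INGARCH recursion `λₜ₊₁ = ν + α Xₜ + β λₜ`. In kernel language: both chains are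
intertwined with the chain `(Xₜ, μₜ)` by kernels that keep `Xₜ` (draw `Lₜ ~ Pois(β μₜ)`,
resp. set `λₜ = τ + (1 - β) μₜ`), so all three have the same law of observed trajectories.
-/

set_option linter.deprecated false

open ProbabilityTheory
open scoped NNReal ENNReal

/-- Binomial thinning `β ∘ n`: the distribution of the number of successes among `n`
independent Bernoulli(β) trials, as a `PMF` on `ℕ`. -/
noncomputable def binThin (b : ℝ≥0∞) (hb : b ≤ 1) (n : ℕ) : PMF ℕ :=
  (PMF.binomial b.toNNReal (by exact_mod_cast ENNReal.coe_toNNReal_le_self.trans hb) n).map Fin.val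

/-- One step of the thinning-based Poisson INGARCH(1,1) process, as a Markov kernel on the
state `(Xₜ, Lₜ)`: draw `Cₜ = κ ⋆ Xₜ` (Poisson thinning, i.e. `Cₜ | Xₜ ~ Pois(κ·Xₜ)`), set
`Eₜ₊₁ = Lₜ + Cₜ`, draw `Lₜ₊₁ = β ∘ Eₜ₊₁`, set `Aₜ₊₁ = Eₜ₊₁ - Lₜ₊₁`, draw `Iₜ₊₁ ~ Pois(τ)`
and set `Xₜ₊₁ = Iₜ₊₁ + Aₜ₊₁`. -/
noncomputable def thinStep (τ κ : ℝ≥0) (b : ℝ≥0∞) (hb : b ≤ 1) (s : ℕ × ℕ) :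
    PMF (ℕ × ℕ) :=
  (poissonPMF (κ * s.1)).bind fun c =>
    (binThin b hb (s.2 + c)).bind fun l' =>
      (poissonPMF τ).map fun i' => (i' + ((s.2 + c) - l'), l')

/-- Initialization of the thinning-based process: `X₀` fixed, `E₀ ~ Pois(η)`, `L₀ = β ∘ E₀`. -/
noncomputable def thinInit (η : ℝ≥0) (b : ℝ≥0∞) (hb : b ≤ 1) (x0 : ℕ) : PMF (ℕ × ℕ) :=
  (poissonPMF η).bind fun e => (binThin b hb e).map fun l => (x0, l)

/-- Law of the trajectory `(X₀, …, Xₙ)` (together with the current state) of the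
thinning-based Poisson INGARCH(1,1) process. -/
noncomputable def thinPath (τ κ η : ℝ≥0) (b : ℝ≥0∞) (hb : b ≤ 1) (x0 : ℕ) :
    ℕ → PMF (List ℕ × (ℕ × ℕ))
  | 0 => (thinInit η b hb x0).map fun s => ([s.1], s)
  | n + 1 => (thinPath τ κ η b hb x0 n).bind fun h =>
      (thinStep τ κ b hb h.2).map fun s' => (h.1 ++ [s'.1], s')

/-- One step of the classical Poisson INGARCH(1,1) process, as a Markov kernel on the state
`(X'ₜ, λₜ)`: set `λₜ₊₁ = ν + α·X'ₜ + β·λₜ` and draw `X'ₜ₊₁ ~ Pois(λₜ₊₁)`. -/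
noncomputable def classicalStep (ν α β : ℝ≥0) (s : ℕ × ℝ≥0) : PMF (ℕ × ℝ≥0) :=
  (poissonPMF (ν + α * s.1 + β * s.2)).map fun x' => (x', ν + α * s.1 + β * s.2)

/-- Law of the trajectory `(X'₀, …, X'ₙ)` (together with the current state) of the classical
Poisson INGARCH(1,1) process started at `X'₀ = x0`, `λ₀ = lam0`. -/
noncomputable def classicalPath (ν α β : ℝ≥0) (x0 : ℕ) (lam0 : ℝ≥0) :
    ℕ → PMF (List ℕ × (ℕ × ℝ≥0))
  | 0 => PMF.pure ([x0], (x0, lam0))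
  | n + 1 => (classicalPath ν α β x0 lam0 n).bind fun h =>
      (classicalStep ν α β h.2).map fun s' => (h.1 ++ [s'.1], s')

open scoped Nat

namespace PMF

lemma bind_map_add_apply (p q : PMF ℕ) (n : ℕ) :
    (p.bind fun m => q.map (m + ·)) n = ∑ m ∈ Finset.range (n + 1), p m * q (n - m) := by
  rw [bind_apply, tsum_eq_sum (s := Finset.range (n + 1))]
  · refine Finset.sum_congr rfl fun m hm => ?_
    rw [map_apply, tsum_eq_single (n - m) (by grind), if_pos (by grind)]
  · intro m hm
    rw [map_apply, ENNReal.tsum_eq_zero.mpr (by grind), mul_zero]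

lemma bind_map_prodMk_apply {α β : Type*} (p : PMF α) (q : PMF β) (a : α) (b : β) :
    (p.bind fun a' => q.map (Prod.mk a')) (a, b) = p a * q b := by
  rw [bind_apply, tsum_eq_single a fun a' ha' => ?_]
  · rw [map_apply, tsum_eq_single b (by simp +contextual [eq_comm]), if_pos rfl]
  · rw [map_apply, ENNReal.tsum_eq_zero.mpr (by simp [Ne.symm ha']), mul_zero]

lemma bind_map_prodMk_sub_apply (p : PMF ℕ) (K : ℕ → PMF ℕ) (hK : ∀ e l, e < l → K e l = 0)
    (l a : ℕ) :
    (p.bind fun e => (K e).map fun l' => (l', e - l')) (l, a) = p (l + a) * K (l + a) l := by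
  have hmap (e : ℕ) :
      ((K e).map fun l' => (l', e - l')) (l, a) = if a = e - l then K e l else 0 := by
    rw [map_apply, tsum_eq_single l (by simp +contextual [eq_comm])]
    simp
  rw [bind_apply, tsum_eq_single (l + a) fun e he => ?_, hmap, if_pos (by omega)]
  rw [hmap]
  split_ifs with h
  · rw [hK e l (by omega), mul_zero]
  · rw [mul_zero]

end PMF

noncomputable def poissonWeight (r : ℝ) (n : ℕ) : ℝ := Real.exp (-r) * r ^ n / n !

lemma poissonWeight_nonneg {r : ℝ} (hr : 0 ≤ r) (n : ℕ) : 0 ≤ poissonWeight r n := by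
  unfold poissonWeight; positivity

lemma poissonPMF_apply (r : ℝ≥0) (n : ℕ) :
    poissonPMF r n = ENNReal.ofReal (poissonWeight r n) :=
  rfl

lemma poissonWeight_conv (a c : ℝ) (n : ℕ) :
    ∑ m ∈ Finset.range (n + 1), poissonWeight a m * poissonWeight c (n - m) =
      poissonWeight (a + c) n := by
  simp only [poissonWeight, add_pow, neg_add, Real.exp_add, Finset.mul_sum, Finset.sum_div]
  refine Finset.sum_congr rfl fun m hm => ?_
  have hchoose : (n.choose m : ℝ) * m ! * (n - m)! = n ! := by
    exact_mod_cast Nat.choose_mul_factorial_mul_factorial (Finset.mem_range_succ_iff.mp hm)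
  field_simp
  linear_combination -(a ^ m * c ^ (n - m)) * hchoose

lemma poissonWeight_mul_binomial (μ β : ℝ) (l a : ℕ) :
    poissonWeight μ (l + a) * (β ^ l * (1 - β) ^ a * (l + a).choose l) =
      poissonWeight (β * μ) l * poissonWeight ((1 - β) * μ) a := by
  have hchoose : ((l + a).choose l : ℝ) * l ! * a ! = (l + a)! := by
    rw [Nat.choose_symm_add]; exact_mod_cast Nat.add_choose_mul_factorial_mul_factorial l a
  have hexp : Real.exp (-μ) = Real.exp (-(β * μ)) * Real.exp (-((1 - β) * μ)) := by
    rw [← Real.exp_add]; ring_nf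
  simp only [poissonWeight, hexp, mul_pow, pow_add]
  field_simp
  linear_combination (β ^ l * (1 - β) ^ a * μ ^ l * μ ^ a) * hchoose

lemma binThin_apply (b : ℝ≥0∞) (hb : b ≤ 1) (n k : ℕ) :
    binThin b hb n k = if k ≤ n then b ^ k * (1 - b) ^ (n - k) * n.choose k else 0 := by
  have hb' : ((b.toNNReal : ℝ≥0) : ℝ≥0∞) = b :=
    ENNReal.coe_toNNReal (ne_top_of_le_ne_top ENNReal.one_ne_top hb)
  rw [binThin, PMF.map_apply]
  split_ifs with hk
  · rw [tsum_eq_single (⟨k, Nat.lt_succ_of_le hk⟩ : Fin (n + 1))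
      (by simp +contextual [Fin.ext_iff, eq_comm])]
    simp [PMF.binomial_apply, hb']
  · exact ENNReal.tsum_eq_zero.mpr fun i => if_neg fun h : k = i => hk (h ▸ Fin.is_le i)

lemma poissonPMF_bind_map_add (a c : ℝ≥0) :
    ((poissonPMF a).bind fun m => (poissonPMF c).map (m + ·)) = poissonPMF (a + c) := by
  ext n
  simp only [PMF.bind_map_add_apply, poissonPMF_apply]
  rw [NNReal.coe_add, ← poissonWeight_conv, ENNReal.ofReal_sum_of_nonneg fun m _ =>
    mul_nonneg (poissonWeight_nonneg a.coe_nonneg _) (poissonWeight_nonneg c.coe_nonneg _)]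
  exact Finset.sum_congr rfl fun m _ =>
    (ENNReal.ofReal_mul (poissonWeight_nonneg a.coe_nonneg m)).symm

lemma poissonPMF_bind_binThin_map (μ β : ℝ≥0) (hβ : (β : ℝ≥0∞) ≤ 1) :
    ((poissonPMF μ).bind fun e => (binThin β hβ e).map fun l => (l, e - l)) =
      (poissonPMF (β * μ)).bind fun l => (poissonPMF ((1 - β) * μ)).map (Prod.mk l) := by
  have hβ' : β ≤ 1 := by exact_mod_cast hβ
  ext ⟨l, a⟩
  rw [PMF.bind_map_prodMk_sub_apply _ _ fun e l h => by rw [binThin_apply, if_neg (by omega)],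
    PMF.bind_map_prodMk_apply, binThin_apply, if_pos (Nat.le_add_right l a), add_tsub_cancel_left]
  have hweight : (β : ℝ≥0∞) ^ l * (1 - β) ^ a * (l + a).choose l =
      ENNReal.ofReal (β ^ l * (1 - β : ℝ≥0) ^ a * (l + a).choose l) := by
    rw [ENNReal.ofReal_mul (by positivity), ENNReal.ofReal_mul (by positivity), ENNReal.ofReal_pow
      β.coe_nonneg, ENNReal.ofReal_pow (1 - β).coe_nonneg, ENNReal.ofReal_coe_nnreal,
      ENNReal.ofReal_coe_nnreal, ENNReal.ofReal_natCast, ENNReal.coe_sub, ENNReal.coe_one]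
  rw [hweight, poissonPMF_apply, poissonPMF_apply, poissonPMF_apply,
    ← ENNReal.ofReal_mul (poissonWeight_nonneg μ.coe_nonneg _),
    ← ENNReal.ofReal_mul (poissonWeight_nonneg (β * μ).coe_nonneg _)]
  push_cast [NNReal.coe_sub hβ']
  rw [poissonWeight_mul_binomial]

lemma poissonPMF_bind_add {α : Type*} (a c : ℝ≥0) (f : ℕ → PMF α) :
    ((poissonPMF a).bind fun m => (poissonPMF c).bind fun n => f (m + n)) =
      (poissonPMF (a + c)).bind f := by
  rw [← poissonPMF_bind_map_add, PMF.bind_bind]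
  simp only [PMF.bind_map, Function.comp_def]

lemma poissonPMF_bind_binThin {α : Type*} (μ β : ℝ≥0) (hβ : (β : ℝ≥0∞) ≤ 1)
    (f : ℕ → ℕ → PMF α) :
    ((poissonPMF μ).bind fun e => (binThin β hβ e).bind fun l => f l (e - l)) =
      (poissonPMF (β * μ)).bind fun l => (poissonPMF ((1 - β) * μ)).bind (f l) := by
  have h := congrArg (·.bind fun s : ℕ × ℕ => f s.1 s.2) (poissonPMF_bind_binThin_map μ β hβ)
  simpa only [PMF.bind_bind, PMF.bind_map, Function.comp_def] using h

noncomputable def trajectoryLaw {A : Type*} (init : PMF (List ℕ × (ℕ × A)))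
    (step : ℕ × A → PMF (ℕ × A)) : ℕ → PMF (List ℕ × (ℕ × A))
  | 0 => init
  | n + 1 => (trajectoryLaw init step n).bind fun h =>
      (step h.2).map fun s' => (h.1 ++ [s'.1], s')

section Intertwining

variable {A B : Type*} {init₁ : PMF (List ℕ × (ℕ × A))} {step₁ : ℕ × A → PMF (ℕ × A)}
  {init₂ : PMF (List ℕ × (ℕ × B))} {step₂ : ℕ × B → PMF (ℕ × B)}

theorem trajectoryLaw_eq_bind_of_intertwines (Λ : ℕ × B → PMF A)
    (h_init : init₁ = init₂.bind fun h => (Λ h.2).map fun a => (h.1, (h.2.1, a)))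
    (h_step : ∀ s, (Λ s).bind (fun a => step₁ (s.1, a)) =
      (step₂ s).bind fun s' => (Λ s').map fun a => (s'.1, a)) (n : ℕ) :
    trajectoryLaw init₁ step₁ n =
      (trajectoryLaw init₂ step₂ n).bind fun h => (Λ h.2).map fun a => (h.1, (h.2.1, a)) := by
  induction n with
  | zero => exact h_init
  | succ n ih =>
    rw [trajectoryLaw, trajectoryLaw, ih, PMF.bind_bind, PMF.bind_bind]
    refine congrArg _ (funext fun h => ?_)
    have := congrArg (PMF.map fun s' : ℕ × A => (h.1 ++ [s'.1], s')) (h_step h.2)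
    simpa only [PMF.bind_map, PMF.map_bind, PMF.map_comp, Function.comp_def] using this

theorem map_fst_trajectoryLaw_eq_of_intertwines (Λ : ℕ × B → PMF A)
    (h_init : init₁ = init₂.bind fun h => (Λ h.2).map fun a => (h.1, (h.2.1, a)))
    (h_step : ∀ s, (Λ s).bind (fun a => step₁ (s.1, a)) =
      (step₂ s).bind fun s' => (Λ s').map fun a => (s'.1, a)) (n : ℕ) :
    (trajectoryLaw init₁ step₁ n).map Prod.fst =
      (trajectoryLaw init₂ step₂ n).map Prod.fst := by
  rw [trajectoryLaw_eq_bind_of_intertwines Λ h_init h_step, PMF.map_bind]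
  simp only [PMF.map_comp, Function.comp_def]
  exact congrArg _ (funext fun h => PMF.map_const _ _)

end Intertwining

/-- The chain `(Xₜ, μₜ)`, where `μₜ` is the rate of the Poisson law of `Eₜ` given the past. -/
noncomputable def latentRateStep (τ κ β : ℝ≥0) (s : ℕ × ℝ≥0) : PMF (ℕ × ℝ≥0) :=
  (poissonPMF (τ + (1 - β) * (β * s.2 + κ * s.1))).map fun x' => (x', β * s.2 + κ * s.1)

lemma thinPath_eq_trajectoryLaw (τ κ η : ℝ≥0) (b : ℝ≥0∞) (hb : b ≤ 1) (x0 n : ℕ) :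
    thinPath τ κ η b hb x0 n =
      trajectoryLaw ((thinInit η b hb x0).map fun s => ([s.1], s)) (thinStep τ κ b hb) n := by
  induction n with
  | zero => rfl
  | succ n ih => rw [thinPath, trajectoryLaw, ih]

lemma classicalPath_eq_trajectoryLaw (ν α β : ℝ≥0) (x0 : ℕ) (lam0 : ℝ≥0) (n : ℕ) :
    classicalPath ν α β x0 lam0 n =
      trajectoryLaw (PMF.pure ([x0], (x0, lam0))) (classicalStep ν α β) n := by
  induction n with
  | zero => rfl
  | succ n ih => rw [classicalPath, trajectoryLaw, ih]

lemma thinStep_intertwines_latentRateStep (τ κ β : ℝ≥0) (hβ : (β : ℝ≥0∞) ≤ 1)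
    (s : ℕ × ℝ≥0) :
    ((poissonPMF (β * s.2)).bind fun l => thinStep τ κ β hβ (s.1, l)) =
      (latentRateStep τ κ β s).bind fun s' =>
        (poissonPMF (β * s'.2)).map fun l => (s'.1, l) := by
  calc ((poissonPMF (β * s.2)).bind fun l => thinStep τ κ β hβ (s.1, l))
      = (poissonPMF (β * s.2 + κ * s.1)).bind fun e => (binThin β hβ e).bind fun l' =>
          (poissonPMF τ).map fun i => (i + (e - l'), l') := by
        simp only [thinStep]
        exact poissonPMF_bind_add _ _ fun e => (binThin β hβ e).bind fun l' =>
          (poissonPMF τ).map fun i => (i + (e - l'), l')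
    _ = (poissonPMF (β * (β * s.2 + κ * s.1))).bind fun l' =>
          (poissonPMF ((1 - β) * (β * s.2 + κ * s.1))).bind fun a =>
            (poissonPMF τ).map fun i => (i + a, l') :=
        poissonPMF_bind_binThin _ β hβ fun l' a => (poissonPMF τ).map fun i => (i + a, l')
    _ = (poissonPMF (β * (β * s.2 + κ * s.1))).bind fun l' =>
          (poissonPMF (τ + (1 - β) * (β * s.2 + κ * s.1))).map fun x' => (x', l') := by
        refine congrArg _ (funext fun l' => ?_)
        simp only [← PMF.bind_pure_comp]
        rw [PMF.bind_comm]
        exact poissonPMF_bind_add _ _ fun x' => PMF.pure (x', l')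
    _ = _ := by
        simp only [latentRateStep, ← PMF.bind_pure_comp, PMF.bind_bind, PMF.pure_bind,
          Function.comp_def]
        exact PMF.bind_comm _ _ _

lemma map_thinInit_eq_bind (η β : ℝ≥0) (hβ : (β : ℝ≥0∞) ≤ 1) (x0 : ℕ) :
    (thinInit η β hβ x0).map (fun s => ([s.1], s)) =
      (PMF.pure ([x0], (x0, η))).bind fun h =>
        (poissonPMF (β * h.2.2)).map fun a => (h.1, (h.2.1, a)) := by
  have h := poissonPMF_bind_binThin η β hβ fun l _ => PMF.pure ([x0], (x0, l))
  simp only [PMF.bind_const] at h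
  simp only [thinInit, PMF.pure_bind, PMF.map_bind, PMF.map_comp, Function.comp_def]
  exact h

lemma classicalStep_intertwines_latentRateStep (τ κ β : ℝ≥0) (hβ : β ≤ 1) (s : ℕ × ℝ≥0) :
    ((PMF.pure (τ + (1 - β) * s.2)).bind fun a =>
        classicalStep ((1 - β) * τ) ((1 - β) * κ) β (s.1, a)) =
      (latentRateStep τ κ β s).bind fun s' =>
        (PMF.pure (τ + (1 - β) * s'.2)).map fun a => (s'.1, a) := by
  have hrate : (1 - β) * τ + (1 - β) * κ * s.1 + β * (τ + (1 - β) * s.2) =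
      τ + (1 - β) * (β * s.2 + κ * s.1) := by
    apply NNReal.coe_injective
    push_cast [NNReal.coe_sub hβ]
    ring
  simp only [classicalStep, latentRateStep, PMF.pure_bind, PMF.pure_map, PMF.bind_map,
    Function.comp_def, hrate]
  rfl

/-- Equivalence of the thinning-based and classical Poisson INGARCH(1,1) models: with
`ν = (1-β)τ`, `α = (1-β)κ` and `λ₀ = τ + (1-β)η`, the laws of the trajectories
`(X₀, …, Xₙ)` of the two processes coincide for every `n`, i.e. the two processes have the
same distribution. -/
theorem ingarch11_thinning_equivalence
    (τ κ η β : ℝ≥0) (hβ : β < 1) (x0 : ℕ) :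
    ∀ n : ℕ,
      (thinPath τ κ η (β : ℝ≥0∞) (by exact_mod_cast hβ.le) x0 n).map Prod.fst =
      (classicalPath ((1 - β) * τ) ((1 - β) * κ) β x0 (τ + (1 - β) * η) n).map Prod.fst := by
  intro n
  have hβ' : (β : ℝ≥0∞) ≤ 1 := by exact_mod_cast hβ.le
  rw [thinPath_eq_trajectoryLaw, classicalPath_eq_trajectoryLaw]
  exact (map_fst_trajectoryLaw_eq_of_intertwines _ (map_thinInit_eq_bind η β hβ' x0)
      (thinStep_intertwines_latentRateStep τ κ β hβ') n).trans
    (map_fst_trajectoryLaw_eq_of_intertwines _ (by rw [PMF.pure_bind, PMF.pure_map])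
      (classicalStep_intertwines_latentRateStep τ κ β hβ.le) n).symm
end
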